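/- arXiv:2412.00901 — 6 statements merged into one kernel-verified Lean document; each statement's English description precedes it below -/
import Mathlib

section
/- Strong duality for the budgeted robust subproblem: let N be a finite set with n = |N|, g : N → ℝ nonnegative, and 0 ≤ Γ ≤ |N| with Γ an integer for simplicity. Order g nonincreasingly as g_{j_1} ≥ ⋯ ≥ g_{j_n} and set β* = g_{j_{Γ+1}} if Γ < n, else β* = 0, and γ*_j = max(0, g_j − β*). Then (β*, γ*) is dual feasible with objective Γβ* + ∑_j γ*_j equal to ∑_{m=1}^{Γ} g_{j_m}, which is the optimal value of the primal 'maximize ∑_j ξ_j g_j subject to ∑_j ξ_j ≤ Γ, 0 ≤ ξ ≤ 1'. -/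
/-- strong duality for the budgeted robust subproblem with integer budget:
with `β* = g_{j_{Γ+1}}` (or `0` if `Γ = n`) and `γ*_j = max 0 (g_j - β*)`, the pair
`(β*, γ*)` is dual feasible, its objective equals `∑_{m < Γ} g_{j_m}`, and this value is
the optimal value of the primal. -/
theorem stmt3 {N : Type*} [Fintype N] {n : ℕ} (e : Fin n ≃ N)
    (g : N → ℝ) (hg : ∀ j, 0 ≤ g j)
    (hmono : ∀ m m' : Fin n, m ≤ m' → g (e m') ≤ g (e m))
    (Γ : ℕ) (hΓ : Γ ≤ n)
    (βs : ℝ) (hβs : βs = if h : Γ < n then g (e ⟨Γ, h⟩) else 0)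
    (γs : N → ℝ) (hγs : ∀ j, γs j = max 0 (g j - βs)) :
    (0 ≤ βs ∧ (∀ j, 0 ≤ γs j) ∧ (∀ j, βs + γs j ≥ g j)) ∧
    ((Γ : ℝ) * βs + ∑ j, γs j =
      ∑ m ∈ Finset.univ.filter (fun m : Fin n => (m : ℕ) < Γ), g (e m)) ∧
    IsGreatest
      {v : ℝ | ∃ ξ : N → ℝ, (∀ j, 0 ≤ ξ j ∧ ξ j ≤ 1) ∧ (∑ j, ξ j) ≤ (Γ : ℝ) ∧
        v = ∑ j, ξ j * g j}
      (∑ m ∈ Finset.univ.filter (fun m : Fin n => (m : ℕ) < Γ), g (e m)) := by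
  classical
  set T := Finset.univ.filter (fun m : Fin n => (m : ℕ) < Γ) with hT
  have hcard : T.card = Γ := by
    calc T.card = ∑ m : Fin n, if (m : ℕ) < Γ then 1 else 0 := Finset.card_filter _ _
      _ = ∑ i ∈ Finset.range n, if i < Γ then 1 else 0 :=
          Fin.sum_univ_eq_sum_range (fun i => if i < Γ then 1 else 0) n
      _ = ((Finset.range n).filter (· < Γ)).card := (Finset.card_filter _ _).symm
      _ = Γ := by
          have h : Finset.filter (fun x => x < Γ) (Finset.range n) = Finset.range Γ := by
            ext x; simp; omega
          simp [h]
  have hβ0 : 0 ≤ βs := by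
    rw [hβs]; split
    · exact hg _
    · exact le_refl 0
  have hβle : ∀ m : Fin n, (m : ℕ) < Γ → βs ≤ g (e m) := by
    intro m hm
    rw [hβs]; split
    · exact hmono m _ (by simp [Fin.le_def]; omega)
    · exact hg _
  have hβge : ∀ m : Fin n, ¬ (m : ℕ) < Γ → g (e m) ≤ βs := by
    intro m hm
    have hΓn : Γ < n := lt_of_le_of_lt (Nat.le_of_not_lt hm) m.isLt
    rw [hβs, dif_pos hΓn]
    exact hmono ⟨Γ, hΓn⟩ m (by simp [Fin.le_def]; omega)
  have hγ0 : ∀ j, 0 ≤ γs j := fun j => (hγs j).symm ▸ le_max_left _ _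
  have feas : 0 ≤ βs ∧ (∀ j, 0 ≤ γs j) ∧ (∀ j, βs + γs j ≥ g j) := by
    refine ⟨hβ0, hγ0, fun j => ?_⟩
    have := le_max_right 0 (g j - βs)
    rw [hγs]; linarith
  have hsum : ∑ j, γs j = ∑ m ∈ T, (g (e m) - βs) := by
    rw [← e.sum_comp (fun j => γs j),
      ← Finset.sum_filter_add_sum_filter_not Finset.univ (fun m : Fin n => (m : ℕ) < Γ)
        (fun m => γs (e m))]
    have h2 : ∑ m ∈ Finset.univ.filter (fun m : Fin n => ¬ (m : ℕ) < Γ), γs (e m) = 0 := by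
      refine Finset.sum_eq_zero fun m hm => ?_
      have hm' := (Finset.mem_filter.mp hm).2
      rw [hγs]
      exact max_eq_left (by linarith [hβge m hm'])
    rw [h2, add_zero]
    refine Finset.sum_congr rfl fun m hm => ?_
    have hm' := (Finset.mem_filter.mp hm).2
    rw [hγs]
    exact max_eq_right (by linarith [hβle m hm'])
  have obj : (Γ : ℝ) * βs + ∑ j, γs j = ∑ m ∈ T, g (e m) := by
    rw [hsum, Finset.sum_sub_distrib, Finset.sum_const, hcard, nsmul_eq_mul]
    ring
  refine ⟨feas, obj, ?_, ?_⟩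
  · -- membership: indicator of the Γ largest
    refine ⟨fun j => if ((e.symm j : Fin n) : ℕ) < Γ then 1 else 0, fun j => ?_, ?_, ?_⟩
    · dsimp only; split <;> norm_num
    · rw [← e.sum_comp (fun j => if ((e.symm j : Fin n) : ℕ) < Γ then (1 : ℝ) else 0)]
      simp only [Equiv.symm_apply_apply]
      have h5 : (∑ x : Fin n, if (x : ℕ) < Γ then (1 : ℝ) else 0) = Γ := by
        rw [Finset.sum_ite, Finset.sum_const, Finset.sum_const_zero, add_zero, ← hT, hcard,
          nsmul_eq_mul, mul_one]
      exact le_of_eq h5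
    · rw [← e.sum_comp (fun j => (if ((e.symm j : Fin n) : ℕ) < Γ then (1 : ℝ) else 0) * g j)]
      simp only [Equiv.symm_apply_apply, ite_mul, one_mul, zero_mul]
      rw [Finset.sum_ite, Finset.sum_const_zero, add_zero]
  · -- upper bound: weak duality
    rintro v ⟨ξ, hξ01, hξsum, rfl⟩
    have h1 : ∑ j, ξ j * g j ≤ ∑ j, (ξ j * βs + γs j) := by
      refine Finset.sum_le_sum fun j _ => ?_
      have h01 := hξ01 j
      have hfeas := feas.2.2 j
      have : ξ j * g j ≤ ξ j * (βs + γs j) := by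
        apply mul_le_mul_of_nonneg_left hfeas h01.1
      have h2 : ξ j * γs j ≤ γs j := by
        nlinarith [hγ0 j, h01.1, h01.2]
      nlinarith
    have h3 : ∑ j, (ξ j * βs + γs j) = (∑ j, ξ j) * βs + ∑ j, γs j := by
      rw [Finset.sum_add_distrib, Finset.sum_mul]
    rw [← obj]
    have h4 : (∑ j, ξ j) * βs ≤ (Γ : ℝ) * βs := mul_le_mul_of_nonneg_right hξsum hβ0
    calc ∑ j, ξ j * g j ≤ (∑ j, ξ j) * βs + ∑ j, γs j := by rw [← h3]; exact h1
      _ ≤ (Γ : ℝ) * βs + ∑ j, γs j := by linarith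
end

section
/- Robust feasibility via dual variables: let g : N → ℝ, Γ ≥ 0, and a, L ∈ ℝ. A point η satisfies L + max_{ξ∈U} ∑_{j∈N} ξ_j g_j ≤ a (where U = {ξ : 0 ≤ ξ ≤ 1, ∑ξ_j ≤ Γ}) if and only if there exist β ≥ 0 and γ : N → ℝ with γ ≥ 0 such that β + γ_j ≥ g_j for all j and L + Γβ + ∑_j γ_j ≤ a. -/
open Finset

/-- Top-`k` selection: any finset `P` with `k ≤ P.card` contains a `k`-element
subset `S` whose elements dominate (w.r.t. `g`) all elements of `P \ S`. -/
lemma exists_topk {N : Type*} [DecidableEq N] (g : N → ℝ) :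
    ∀ (k : ℕ) (P : Finset N), k ≤ P.card →
      ∃ S : Finset N, S ⊆ P ∧ S.card = k ∧ ∀ i ∈ S, ∀ j ∈ P \ S, g j ≤ g i := by
  intro k
  induction k with
  | zero => intro P _; exact ⟨∅, by simp⟩
  | succ k ih =>
    intro P hk
    obtain ⟨S, hSP, hScard, hSdom⟩ := ih P (Nat.le_of_succ_le hk)
    have hne : (P \ S).Nonempty := by
      rw [← Finset.card_pos, Finset.card_sdiff_of_subset hSP, hScard]
      omega
    obtain ⟨j0, hj0, hj0max⟩ := Finset.exists_max_image (P \ S) g hne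
    have hj0S : j0 ∉ S := (Finset.mem_sdiff.mp hj0).2
    refine ⟨insert j0 S, ?_, ?_, ?_⟩
    · exact Finset.insert_subset (Finset.mem_sdiff.mp hj0).1 hSP
    · rw [Finset.card_insert_of_notMem hj0S, hScard]
    · intro i hi j hj
      have hj' : j ∈ P \ S := by
        rw [Finset.mem_sdiff] at hj ⊢
        exact ⟨hj.1, fun hjS => hj.2 (Finset.mem_insert_of_mem hjS)⟩
      rcases Finset.mem_insert.mp hi with rfl | hiS
      · exact hj0max j hj'
      · exact hSdom i hiS j hj'

/-- robust feasibility via dual variables: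
`L + max_{ξ∈U} ∑ ξ_j g_j ≤ a` iff there are `β ≥ 0`, `γ ≥ 0` with `β + γ_j ≥ g_j`
for all `j` and `L + Γβ + ∑ γ_j ≤ a`. -/
theorem stmt7 {N : Type*} [Fintype N] (g : N → ℝ) (Γ : ℝ) (hΓ : 0 ≤ Γ) (L a : ℝ) :
    (L + sSup {v : ℝ | ∃ ξ : N → ℝ, (∀ j, 0 ≤ ξ j ∧ ξ j ≤ 1) ∧
        (∑ j, ξ j) ≤ Γ ∧ v = ∑ j, ξ j * g j} ≤ a) ↔
      ∃ (β : ℝ) (γ : N → ℝ), 0 ≤ β ∧ (∀ j, 0 ≤ γ j) ∧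
        (∀ j, β + γ j ≥ g j) ∧ L + Γ * β + ∑ j, γ j ≤ a := by
  classical
  set Uset : Set ℝ := {v : ℝ | ∃ ξ : N → ℝ, (∀ j, 0 ≤ ξ j ∧ ξ j ≤ 1) ∧
        (∑ j, ξ j) ≤ Γ ∧ v = ∑ j, ξ j * g j} with hUset
  -- bounded above
  have hbdd : BddAbove Uset := by
    refine ⟨∑ j, max (g j) 0, fun v hv => ?_⟩
    obtain ⟨ξ, hξ01, _, rfl⟩ := hv
    refine Finset.sum_le_sum fun j _ => ?_
    rcases le_or_gt 0 (g j) with hg | hg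
    · calc ξ j * g j ≤ 1 * g j := mul_le_mul_of_nonneg_right (hξ01 j).2 hg
        _ = g j := one_mul _
        _ ≤ max (g j) 0 := le_max_left _ _
    · calc ξ j * g j ≤ 0 := mul_nonpos_of_nonneg_of_nonpos (hξ01 j).1 hg.le
        _ ≤ max (g j) 0 := le_max_right _ _
  constructor
  · intro h
    set P : Finset N := Finset.univ.filter (fun j => 0 < g j) with hP
    by_cases hc : (P.card : ℝ) ≤ Γ
    · -- budget is loose: take β = 0, γ j = max (g j) 0
      refine ⟨0, fun j => max (g j) 0, le_refl _, fun j => le_max_right _ _,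
        fun j => by simpa using le_max_left (g j) 0, ?_⟩
      set ξ : N → ℝ := fun j => if j ∈ P then 1 else 0 with hξ
      have hval : (∑ j, ξ j * g j) = ∑ j, max (g j) 0 := by
        refine Finset.sum_congr rfl fun j _ => ?_
        by_cases hj : j ∈ P
        · have : 0 < g j := (Finset.mem_filter.mp hj).2
          simp [hξ, hj, max_eq_left this.le]
        · have : ¬ 0 < g j := fun hg => hj (Finset.mem_filter.mpr ⟨Finset.mem_univ _, hg⟩)
          simp [hξ, hj, max_eq_right (not_lt.mp this)]
      have hmem : (∑ j, max (g j) 0) ∈ Uset := by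
        refine ⟨ξ, fun j => ?_, ?_, hval.symm⟩
        · by_cases hj : j ∈ P <;> simp [hξ, hj]
        · have : (∑ j, ξ j) = P.card := by
            simp [hξ, Finset.sum_ite_mem, Finset.univ_inter]
          rw [this]; exact hc
      have := le_csSup hbdd hmem
      linarith
    · -- budget is tight: take β = (⌊Γ⌋+1)-th largest positive value
      push_neg at hc
      set k : ℕ := ⌊Γ⌋₊ with hk
      have hkΓ : (k : ℝ) ≤ Γ := Nat.floor_le hΓ
      have hΓk1 : Γ < k + 1 := Nat.lt_floor_add_one Γ
      have hkP : k < P.card := by exact_mod_cast lt_of_le_of_lt hkΓ hc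
      obtain ⟨S, hSP, hScard, hSdom⟩ := exists_topk g k P hkP.le
      have hne : (P \ S).Nonempty := by
        rw [← Finset.card_pos, Finset.card_sdiff_of_subset hSP, hScard]; omega
      obtain ⟨j0, hj0, hj0max⟩ := Finset.exists_max_image (P \ S) g hne
      have hj0P : j0 ∈ P := (Finset.mem_sdiff.mp hj0).1
      have hj0S : j0 ∉ S := (Finset.mem_sdiff.mp hj0).2
      set β : ℝ := g j0 with hβ
      have hβ0 : 0 < β := (Finset.mem_filter.mp hj0P).2
      refine ⟨β, fun j => max (g j - β) 0, hβ0.le, fun j => le_max_right _ _,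
        fun j => by simpa using add_le_add_right (le_max_left (g j - β) 0) β, ?_⟩
      -- the value of γ-sum
      have hγsum : (∑ j, max (g j - β) 0) = ∑ j ∈ S, (g j - β) := by
        have heq : (∑ j, max (g j - β) 0) = ∑ j, if j ∈ S then g j - β else 0 := by
          refine Finset.sum_congr rfl fun j _ => ?_
          by_cases hj : j ∈ S
          · have hβg : β ≤ g j := hSdom j hj j0 hj0
            rw [if_pos hj]; exact max_eq_left (by linarith)
          · have hgβ : g j ≤ β := by
              by_cases hjP : j ∈ P
              · exact hj0max j (Finset.mem_sdiff.mpr ⟨hjP, hj⟩)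
              · have : ¬ 0 < g j := fun hg => hjP (Finset.mem_filter.mpr ⟨Finset.mem_univ _, hg⟩)
                linarith [not_lt.mp this]
            rw [if_neg hj]; exact max_eq_right (by linarith)
        rw [heq, Finset.sum_ite_mem, Finset.univ_inter]
      -- primal point
      set ξ : N → ℝ := fun j => if j ∈ S then 1 else if j = j0 then Γ - k else 0 with hξ
      have hξzero : ∀ j ∈ Finset.univ, j ∉ insert j0 S → ξ j = 0 := by
        intro j _ hj
        have h1 : j ∉ S := fun hjS => hj (Finset.mem_insert_of_mem hjS)
        have h2 : j ≠ j0 := fun hjj => hj (hjj ▸ Finset.mem_insert_self _ _)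
        simp [hξ, h1, h2]
      have hsub : insert j0 S ⊆ Finset.univ := Finset.subset_univ _
      have hξsum : (∑ j, ξ j) = Γ := by
        rw [← Finset.sum_subset hsub hξzero, Finset.sum_insert hj0S]
        have h1 : ξ j0 = Γ - k := by simp [hξ, hj0S]
        have h2 : (∑ j ∈ S, ξ j) = k := by
          rw [Finset.sum_congr rfl fun j hj => (by simp [hξ, hj] : ξ j = 1)]
          simp [hScard]
        rw [h1, h2]; ring
      have hξval : (∑ j, ξ j * g j) = (Γ - k) * β + ∑ j ∈ S, g j := by
        rw [← Finset.sum_subset hsub (fun j hj hj' => by rw [hξzero j hj hj', zero_mul]),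
          Finset.sum_insert hj0S]
        have h1 : ξ j0 * g j0 = (Γ - k) * β := by simp [hξ, hj0S, hβ]
        have h2 : (∑ j ∈ S, ξ j * g j) = ∑ j ∈ S, g j :=
          Finset.sum_congr rfl fun j hj => by simp [hξ, hj]
        rw [h1, h2]
      have hmem : ((Γ - k) * β + ∑ j ∈ S, g j) ∈ Uset := by
        refine ⟨ξ, fun j => ?_, by rw [hξsum], hξval.symm⟩
        by_cases hj : j ∈ S
        · simp [hξ, hj]
        · by_cases hjj : j = j0
          · simp [hξ, hj, hjj, hj0S]; constructor <;> linarith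
          · simp [hξ, hj, hjj]
      have hle := le_csSup hbdd hmem
      have hdual : Γ * β + ∑ j, max (g j - β) 0 = (Γ - k) * β + ∑ j ∈ S, g j := by
        rw [hγsum, Finset.sum_sub_distrib, Finset.sum_const, hScard, nsmul_eq_mul]
        ring
      show L + Γ * β + (∑ j, max (g j - β) 0) ≤ a
      linarith [hdual, hle, h]
  · -- weak duality
    rintro ⟨β, γ, hβ, hγ, hdom, hle⟩
    have hsup : sSup Uset ≤ Γ * β + ∑ j, γ j := by
      refine Real.sSup_le (fun v hv => ?_) ?_
      · obtain ⟨ξ, hξ01, hξΓ, rfl⟩ := hv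
        have h1 : (∑ j, ξ j * g j) ≤ ∑ j, ξ j * (β + γ j) :=
          Finset.sum_le_sum fun j _ => mul_le_mul_of_nonneg_left (hdom j) (hξ01 j).1
        have h2 : (∑ j, ξ j * (β + γ j)) = (∑ j, ξ j) * β + ∑ j, ξ j * γ j := by
          rw [Finset.sum_mul, ← Finset.sum_add_distrib]
          exact Finset.sum_congr rfl fun j _ => by ring
        have h3 : (∑ j, ξ j) * β ≤ Γ * β := mul_le_mul_of_nonneg_right hξΓ hβ
        have h4 : (∑ j, ξ j * γ j) ≤ ∑ j, γ j :=
          Finset.sum_le_sum fun j _ => by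
            calc ξ j * γ j ≤ 1 * γ j := mul_le_mul_of_nonneg_right (hξ01 j).2 (hγ j)
              _ = γ j := one_mul _
        linarith
      · have : (0:ℝ) ≤ ∑ j, γ j := Finset.sum_nonneg fun j _ => hγ j
        have : (0:ℝ) ≤ Γ * β := mul_nonneg hΓ hβ
        positivity
    linarith
end

section
/- Finiteness of worst-case scenarios: for the budgeted box U_i = {ξ : s⁻¹(i) → ℝ | 0 ≤ ξ ≤ 1, ∑_j ξ_j ≤ Γ_i}, every extreme point ξ of U_i has components taking values only in the set {0, 1, Γ_i − ⌊Γ_i⌋}, and at most one component equals Γ_i − ⌊Γ_i⌋ (when Γ_i is non-integer). Hence the number of extreme points of U_i is finite and bounded by ∑_{l=0}^{⌊Γ_i⌋} C(n_i, l) · (1 + (n_i − l)) where n_i = |s⁻¹(i)|. -/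
def setU (n : ℕ) (Γ : ℝ) : Set (Fin n → ℝ) :=
  {ξ : Fin n → ℝ | (∀ j, 0 ≤ ξ j ∧ ξ j ≤ 1) ∧ (∑ j, ξ j) ≤ Γ}

lemma pert {m : ℕ} {U : Set (Fin m → ℝ)} {ξ v : Fin m → ℝ} (hv : v ≠ 0)
    {ε : ℝ} (hε : 0 < ε) (h1 : ξ + ε • v ∈ U) (h2 : ξ - ε • v ∈ U)
    (hξ : ξ ∈ U.extremePoints ℝ) : False := by
  obtain ⟨hmem, hext⟩ := hξ
  have hseg : ξ ∈ openSegment ℝ (ξ - ε • v) (ξ + ε • v) := by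
    refine ⟨1/2, 1/2, by norm_num, by norm_num, by norm_num, ?_⟩
    module
  have h := hext h2 h1 hseg
  have hz : ε • v = 0 := by
    have : ξ - ε • v - ξ = 0 := by rw [h]; abel
    calc ε • v = -(ξ - ε • v - ξ) := by abel
    _ = 0 := by rw [this]; abel
  rcases smul_eq_zero.mp hz with h' | h'
  · exact absurd h' (ne_of_gt hε)
  · exact hv h'

lemma twoInterior {n : ℕ} {Γ : ℝ} {ξ : Fin n → ℝ}
    (hξ : ξ ∈ (setU n Γ).extremePoints ℝ) {j j' : Fin n} (hjj' : j ≠ j')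
    (hj : ξ j ∈ Set.Ioo (0:ℝ) 1) (hj' : ξ j' ∈ Set.Ioo (0:ℝ) 1) : False := by
  obtain ⟨hbox, hsum⟩ := hξ.1
  set v : Fin n → ℝ := Pi.single j 1 - Pi.single j' 1 with hv
  set ε : ℝ := min (min (ξ j) (1 - ξ j)) (min (ξ j') (1 - ξ j')) with hεdef
  have hε : 0 < ε := by
    simp only [hεdef, lt_min_iff]
    refine ⟨⟨hj.1, by linarith [hj.2]⟩, hj'.1, by linarith [hj'.2]⟩
  have hε1 : ε ≤ ξ j := le_trans (min_le_left _ _) (min_le_left _ _)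
  have hε2 : ε ≤ 1 - ξ j := le_trans (min_le_left _ _) (min_le_right _ _)
  have hε3 : ε ≤ ξ j' := le_trans (min_le_right _ _) (min_le_left _ _)
  have hε4 : ε ≤ 1 - ξ j' := le_trans (min_le_right _ _) (min_le_right _ _)
  have hvsum : ∑ i, v i = 0 := by
    simp [hv, Finset.sum_sub_distrib]
  have hvj : v j = 1 := by simp [hv, Pi.single_apply, hjj']
  have hvj' : v j' = -1 := by simp [hv, Pi.single_apply, hjj'.symm]
  have hvo : ∀ i, i ≠ j → i ≠ j' → v i = 0 := by
    intro i h1 h2; simp [hv, Pi.single_apply, h1, h2]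
  have hvne : v ≠ 0 := by
    intro h; have := congrFun h j; rw [hvj] at this; norm_num at this
  have key : ∀ δ : ℝ, |δ| ≤ ε → ξ + δ • v ∈ setU n Γ := by
    intro δ hδ
    have hδ1 : -ε ≤ δ := neg_le_of_abs_le hδ
    have hδ2 : δ ≤ ε := le_of_abs_le hδ
    constructor
    · intro i
      rcases eq_or_ne i j with rfl | h1
      · simp only [Pi.add_apply, Pi.smul_apply, hvj, smul_eq_mul, mul_one]
        constructor <;> nlinarith
      rcases eq_or_ne i j' with rfl | h2
      · simp only [Pi.add_apply, Pi.smul_apply, hvj', smul_eq_mul]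
        constructor <;> nlinarith
      · simp only [Pi.add_apply, Pi.smul_apply, hvo i h1 h2, smul_eq_mul, mul_zero, add_zero]
        exact hbox i
    · calc ∑ i, (ξ + δ • v) i = ∑ i, ξ i + δ * ∑ i, v i := by
            simp [Finset.sum_add_distrib, Finset.mul_sum]
      _ ≤ Γ := by rw [hvsum]; simpa using hsum
  have h1 : ξ + ε • v ∈ setU n Γ := key ε (by rw [abs_of_pos hε])
  have h2 : ξ - ε • v ∈ setU n Γ := by
    have := key (-ε) (by rw [abs_neg, abs_of_pos hε])
    simpa [neg_smul, sub_eq_add_neg] using this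
  exact pert hvne hε h1 h2 hξ

lemma sumFull {n : ℕ} {Γ : ℝ} {ξ : Fin n → ℝ}
    (hξ : ξ ∈ (setU n Γ).extremePoints ℝ) {j : Fin n}
    (hj : ξ j ∈ Set.Ioo (0:ℝ) 1) : ∑ i, ξ i = Γ := by
  obtain ⟨hbox, hsum⟩ := hξ.1
  by_contra hne
  have hlt : ∑ i, ξ i < Γ := lt_of_le_of_ne hsum hne
  set v : Fin n → ℝ := Pi.single j 1 with hv
  set ε : ℝ := min (min (ξ j) (1 - ξ j)) (Γ - ∑ i, ξ i) with hεdef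
  have hε : 0 < ε := by
    simp only [hεdef, lt_min_iff]
    exact ⟨⟨hj.1, by linarith [hj.2]⟩, by linarith⟩
  have hε1 : ε ≤ ξ j := le_trans (min_le_left _ _) (min_le_left _ _)
  have hε2 : ε ≤ 1 - ξ j := le_trans (min_le_left _ _) (min_le_right _ _)
  have hε3 : ε ≤ Γ - ∑ i, ξ i := min_le_right _ _
  have hvj : v j = 1 := by simp [hv]
  have hvo : ∀ i, i ≠ j → v i = 0 := by
    intro i h1; simp [hv, Pi.single_apply, h1]
  have hvsum : ∑ i, v i = 1 := by simp [hv]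
  have hvne : v ≠ 0 := by
    intro h; have := congrFun h j; rw [hvj] at this; norm_num at this
  have key : ∀ δ : ℝ, |δ| ≤ ε → ξ + δ • v ∈ setU n Γ := by
    intro δ hδ
    have hδ1 : -ε ≤ δ := neg_le_of_abs_le hδ
    have hδ2 : δ ≤ ε := le_of_abs_le hδ
    constructor
    · intro i
      rcases eq_or_ne i j with rfl | h1
      · simp only [Pi.add_apply, Pi.smul_apply, hvj, smul_eq_mul, mul_one]
        constructor <;> nlinarith
      · simp only [Pi.add_apply, Pi.smul_apply, hvo i h1, smul_eq_mul, mul_zero, add_zero]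
        exact hbox i
    · calc ∑ i, (ξ + δ • v) i = ∑ i, ξ i + δ * ∑ i, v i := by
            simp [Finset.sum_add_distrib, Finset.mul_sum]
      _ ≤ Γ := by rw [hvsum]; nlinarith
  have h1 : ξ + ε • v ∈ setU n Γ := key ε (by rw [abs_of_pos hε])
  have h2 : ξ - ε • v ∈ setU n Γ := by
    have := key (-ε) (by rw [abs_neg, abs_of_pos hε])
    simpa [neg_smul, sub_eq_add_neg] using this
  exact pert hvne hε h1 h2 hξ

open Finset in
lemma frac_val {n : ℕ} {Γ : ℝ} (hΓ0 : 0 ≤ Γ) {ξ : Fin n → ℝ}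
    (hξ : ξ ∈ (setU n Γ).extremePoints ℝ) {j : Fin n}
    (hj : ξ j ∈ Set.Ioo (0:ℝ) 1) : ξ j = Γ - (⌊Γ⌋₊ : ℝ) := by
  classical
  obtain ⟨hbox, hsum⟩ := hξ.1
  have hfull : ∑ i, ξ i = Γ := sumFull hξ hj
  have hbin : ∀ i, i ≠ j → ξ i = 0 ∨ ξ i = 1 := by
    intro i hi
    by_contra hcon
    push_neg at hcon
    exact twoInterior hξ hi ⟨lt_of_le_of_ne (hbox i).1 (Ne.symm hcon.1),
      lt_of_le_of_ne (hbox i).2 hcon.2⟩ hj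
  set T : Finset (Fin n) := (Finset.univ.erase j).filter (fun i => ξ i = 1) with hT
  have hsplit : ∑ i, ξ i = ξ j + T.card := by
    rw [← Finset.sum_erase_add _ _ (Finset.mem_univ j), add_comm]
    congr 1
    rw [← Finset.sum_filter_add_sum_filter_not (Finset.univ.erase j) (fun i => ξ i = 1)]
    have hz : ∑ i ∈ (Finset.univ.erase j).filter (fun i => ¬ ξ i = 1), ξ i = 0 := by
      refine Finset.sum_eq_zero fun i hi => ?_
      simp only [Finset.mem_filter, Finset.mem_erase] at hi
      rcases hbin i hi.1.1 with h | h
      · exact h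
      · exact absurd h hi.2
    rw [hz, add_zero]
    rw [Finset.sum_congr rfl (fun i hi => (Finset.mem_filter.mp hi).2)]
    simp
    rfl
  have hval : ξ j = Γ - T.card := by rw [hsplit] at hfull; linarith
  have hfloor : ⌊Γ⌋₊ = T.card := by
    rw [hval] at hj
    refine Nat.floor_eq_iff hΓ0 |>.mpr ⟨?_, ?_⟩
    · have := hj.1; push_cast; linarith
    · have := hj.2; push_cast; linarith
  rw [hval, hfloor]

lemma min_inj {α : Type*} [LinearOrder α] {s t : Finset α} (hs : s.card ≤ 1)
    (ht : t.card ≤ 1) (h : s.min = t.min) : s = t := by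
  rcases Nat.le_one_iff_eq_zero_or_eq_one.mp hs with h0 | h1
  · rcases Nat.le_one_iff_eq_zero_or_eq_one.mp ht with h0' | h1'
    · rw [Finset.card_eq_zero.mp h0, Finset.card_eq_zero.mp h0']
    · obtain ⟨b, rfl⟩ := Finset.card_eq_one.mp h1'
      rw [Finset.card_eq_zero.mp h0] at h ⊢
      rw [Finset.min_empty, Finset.min_singleton] at h
      exact absurd h.symm (WithBot.coe_ne_bot)
  · obtain ⟨a, rfl⟩ := Finset.card_eq_one.mp h1
    rcases Nat.le_one_iff_eq_zero_or_eq_one.mp ht with h0' | h1'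
    · rw [Finset.card_eq_zero.mp h0'] at h ⊢
      rw [Finset.min_empty, Finset.min_singleton] at h
      exact absurd h (WithBot.coe_ne_bot)
    · obtain ⟨b, rfl⟩ := Finset.card_eq_one.mp h1'
      rw [Finset.min_singleton, Finset.min_singleton] at h
      rw [WithBot.coe_inj.mp h]

lemma count_le {n k : ℕ} :
    ((Finset.univ.filter fun S : Finset (Fin n) => S.card ≤ k).biUnion
      (fun S => {S} ×ˢ (insert (⊥ : WithBot (Fin n)) (Sᶜ.image (WithBot.some))))).card
    ≤ ∑ l ∈ Finset.range (k + 1), Nat.choose n l * (1 + (n - l)) := by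
  refine le_trans (Finset.card_biUnion_le) ?_
  have step1 : ∀ S ∈ Finset.univ.filter fun S : Finset (Fin n) => S.card ≤ k,
      ({S} ×ˢ (insert (⊥ : WithBot (Fin n)) (Sᶜ.image (WithBot.some)))).card
      ≤ 1 + (n - S.card) := by
    intro S hS
    rw [Finset.card_product, Finset.card_singleton, one_mul]
    refine le_trans (Finset.card_insert_le _ _) ?_
    rw [add_comm]
    refine Nat.add_le_add_left (le_trans (Finset.card_image_le) ?_) 1
    rw [Finset.card_compl]
    simp
  refine le_trans (Finset.sum_le_sum step1) ?_
  rw [← Finset.sum_fiberwise_of_maps_to (g := Finset.card)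
    (t := Finset.range (k+1)) (fun S hS => by
      simp only [Finset.mem_filter] at hS
      exact Finset.mem_range.mpr (Nat.lt_succ_of_le hS.2))]
  refine Finset.sum_le_sum fun l hl => ?_
  have : ∀ S ∈ (Finset.univ.filter fun S : Finset (Fin n) => S.card ≤ k).filter
      (fun S => S.card = l), 1 + (n - S.card) = 1 + (n - l) := by
    intro S hS
    simp only [Finset.mem_filter] at hS
    rw [hS.2]
  rw [Finset.sum_congr rfl this, Finset.sum_const, smul_eq_mul]
  refine Nat.mul_le_mul ?_ le_rfl
  calc ((Finset.univ.filter fun S : Finset (Fin n) => S.card ≤ k).filter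
      (fun S => S.card = l)).card
      ≤ (Finset.univ.filter fun S : Finset (Fin n) => S.card = l).card := by
        refine Finset.card_le_card ?_
        intro S hS
        simp only [Finset.mem_filter] at hS ⊢
        exact ⟨hS.1.1, hS.2⟩
    _ = Nat.choose n l := by
        rw [show (Finset.univ.filter fun S : Finset (Fin n) => S.card = l)
            = Finset.powersetCard l Finset.univ by
          ext S; simp [Finset.mem_powersetCard]]
        rw [Finset.card_powersetCard, Finset.card_univ, Fintype.card_fin]

/-- every extreme point of the budgeted box
`U = {ξ ∈ ℝ^n : 0 ≤ ξ ≤ 1, ∑ ξ_j ≤ Γ}` has components in `{0, 1, Γ - ⌊Γ⌋}`, with at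
most one component equal to `Γ - ⌊Γ⌋` when `Γ` is non-integer; hence the set of
extreme points is finite, of cardinality at most
`∑_{l=0}^{⌊Γ⌋} C(n,l) (1 + (n - l))`. -/
theorem stmt11 {n : ℕ} (Γ : ℝ) (hΓ0 : 0 ≤ Γ) (hΓn : Γ ≤ n)
    (U : Set (Fin n → ℝ))
    (hU : U = {ξ : Fin n → ℝ | (∀ j, 0 ≤ ξ j ∧ ξ j ≤ 1) ∧ (∑ j, ξ j) ≤ Γ}) :
    (∀ ξ ∈ U.extremePoints ℝ,
      (∀ j, ξ j = 0 ∨ ξ j = 1 ∨ ξ j = Γ - (⌊Γ⌋₊ : ℝ)) ∧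
      (Γ ≠ (⌊Γ⌋₊ : ℝ) → {j : Fin n | ξ j = Γ - (⌊Γ⌋₊ : ℝ)}.Subsingleton)) ∧
    (U.extremePoints ℝ).Finite ∧
    (U.extremePoints ℝ).ncard ≤
      ∑ l ∈ Finset.range (⌊Γ⌋₊ + 1), Nat.choose n l * (1 + (n - l)) := by
  classical
  have hU' : U = setU n Γ := hU
  subst hU'
  set E := (setU n Γ).extremePoints ℝ with hE
  set k := ⌊Γ⌋₊ with hk
  have hc0 : (0:ℝ) ≤ Γ - k := by
    have := Nat.floor_le hΓ0; linarith
  have hc1 : Γ - (k:ℝ) < 1 := by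
    have := Nat.lt_floor_add_one Γ; linarith
  -- trichotomy of coordinates
  have tri : ∀ ξ ∈ E, ∀ j, ξ j = 0 ∨ ξ j = 1 ∨ ξ j ∈ Set.Ioo (0:ℝ) 1 := by
    intro ξ hξ j
    obtain ⟨hbox, -⟩ := hξ.1
    by_cases h0 : ξ j = 0
    · exact Or.inl h0
    by_cases h1 : ξ j = 1
    · exact Or.inr (Or.inl h1)
    · exact Or.inr (Or.inr ⟨lt_of_le_of_ne (hbox j).1 (Ne.symm h0),
        lt_of_le_of_ne (hbox j).2 h1⟩)
  have part1 : ∀ ξ ∈ E,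
      (∀ j, ξ j = 0 ∨ ξ j = 1 ∨ ξ j = Γ - (k : ℝ)) ∧
      (Γ ≠ (k : ℝ) → {j : Fin n | ξ j = Γ - (k : ℝ)}.Subsingleton) := by
    intro ξ hξ
    constructor
    · intro j
      rcases tri ξ hξ j with h | h | h
      · exact Or.inl h
      · exact Or.inr (Or.inl h)
      · exact Or.inr (Or.inr (frac_val hΓ0 hξ h))
    · intro hne j hj j' hj'
      simp only [Set.mem_setOf_eq] at hj hj'
      have hcpos : 0 < Γ - (k:ℝ) := lt_of_le_of_ne hc0 (by
        intro h; exact hne (by linarith))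
      by_contra hne'
      exact twoInterior hξ hne' (by rw [hj]; exact ⟨hcpos, hc1⟩)
        (by rw [hj']; exact ⟨hcpos, hc1⟩)
  -- the injection
  set φ : (Fin n → ℝ) → Finset (Fin n) × WithBot (Fin n) := fun ξ =>
    (Finset.univ.filter (fun j => ξ j = 1),
     (Finset.univ.filter (fun j => ξ j ∈ Set.Ioo (0:ℝ) 1)).min) with hφ
  have cardIoo : ∀ ξ ∈ E, (Finset.univ.filter (fun j => ξ j ∈ Set.Ioo (0:ℝ) 1)).card ≤ 1 := by
    intro ξ hξ
    refine Finset.card_le_one.mpr fun a ha b hb => ?_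
    simp only [Finset.mem_filter] at ha hb
    by_contra hab
    exact twoInterior hξ hab ha.2 hb.2
  have hinj : Set.InjOn φ E := by
    intro ξ hξ η hη heq
    have h1 : (Finset.univ.filter (fun j => ξ j = 1))
        = (Finset.univ.filter (fun j => η j = 1)) := congrArg Prod.fst heq
    have h2 : (Finset.univ.filter (fun j => ξ j ∈ Set.Ioo (0:ℝ) 1))
        = (Finset.univ.filter (fun j => η j ∈ Set.Ioo (0:ℝ) 1)) :=
      min_inj (cardIoo ξ hξ) (cardIoo η hη) (congrArg Prod.snd heq)
    have h1' : ∀ j, ξ j = 1 ↔ η j = 1 := by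
      intro j
      constructor <;> intro h
      · have : j ∈ Finset.univ.filter (fun j => η j = 1) := by
          rw [← h1]; simp [h]
        simpa using this
      · have : j ∈ Finset.univ.filter (fun j => ξ j = 1) := by
          rw [h1]; simp [h]
        simpa using this
    have h2' : ∀ j, ξ j ∈ Set.Ioo (0:ℝ) 1 ↔ η j ∈ Set.Ioo (0:ℝ) 1 := by
      intro j
      constructor <;> intro h
      · have : j ∈ Finset.univ.filter (fun j => η j ∈ Set.Ioo (0:ℝ) 1) := by
          rw [← h2]; exact Finset.mem_filter.mpr ⟨Finset.mem_univ j, h⟩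
        exact (Finset.mem_filter.mp this).2
      · have : j ∈ Finset.univ.filter (fun j => ξ j ∈ Set.Ioo (0:ℝ) 1) := by
          rw [h2]; exact Finset.mem_filter.mpr ⟨Finset.mem_univ j, h⟩
        exact (Finset.mem_filter.mp this).2
    funext j
    rcases tri ξ hξ j with h | h | h
    · rcases tri η hη j with h' | h' | h'
      · rw [h, h']
      · exact absurd ((h1' j).mpr h') (by rw [h]; norm_num)
      · exact absurd ((h2' j).mpr h') (by rw [h]; simp)
    · rw [h, (h1' j).mp h]
    · rw [frac_val hΓ0 hξ h, frac_val hΓ0 hη ((h2' j).mp h)]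
  -- image is contained in a finite set T
  set T : Finset (Finset (Fin n) × WithBot (Fin n)) :=
    (Finset.univ.filter fun S : Finset (Fin n) => S.card ≤ k).biUnion
      (fun S => {S} ×ˢ (insert (⊥ : WithBot (Fin n)) (Sᶜ.image (WithBot.some)))) with hT
  have hsub : φ '' E ⊆ ↑T := by
    rintro _ ⟨ξ, hξ, rfl⟩
    obtain ⟨hbox, hsum⟩ := hξ.1
    set S := Finset.univ.filter (fun j => ξ j = 1) with hS
    have hScard : S.card ≤ k := by
      refine Nat.le_floor ?_
      calc (S.card : ℝ) = ∑ j ∈ S, ξ j := by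
            rw [Finset.sum_congr rfl (fun j hj => (Finset.mem_filter.mp hj).2)]
            simp
            rfl
        _ ≤ ∑ j, ξ j := Finset.sum_le_sum_of_subset_of_nonneg (Finset.subset_univ S)
            (fun j _ _ => (hbox j).1)
        _ ≤ Γ := hsum
    refine Finset.mem_coe.mpr (Finset.mem_biUnion.mpr ⟨S, by simp [hScard], ?_⟩)
    rw [Finset.mem_product]
    refine ⟨Finset.mem_singleton_self S, ?_⟩
    rcases Finset.eq_empty_or_nonempty
        (Finset.univ.filter (fun j => ξ j ∈ Set.Ioo (0:ℝ) 1)) with hemp | hne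
    · simp only [hφ, hemp, Finset.min_empty]
      exact Finset.mem_insert_self _ _
    · obtain ⟨j₀, hj₀⟩ := hne
      have : Finset.univ.filter (fun j => ξ j ∈ Set.Ioo (0:ℝ) 1) = {j₀} := by
        refine Finset.eq_singleton_iff_unique_mem.mpr ⟨hj₀, fun b hb => ?_⟩
        exact Finset.card_le_one.mp (cardIoo ξ hξ) b hb j₀ hj₀
      simp only [hφ, this, Finset.min_singleton]
      refine Finset.mem_insert_of_mem (Finset.mem_image.mpr ⟨j₀, ?_, rfl⟩)
      simp only [Finset.mem_compl, hS, Finset.mem_filter]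
      intro hcon
      have := (Finset.mem_filter.mp hj₀).2
      rw [hcon.2] at this
      exact absurd this.2 (lt_irrefl 1)
  have hfin : E.Finite := Set.Finite.of_finite_image (Set.Finite.subset T.finite_toSet hsub) hinj
  refine ⟨part1, hfin, ?_⟩
  calc E.ncard = (φ '' E).ncard := (Set.ncard_image_of_injOn hinj).symm
    _ ≤ (↑T : Set _).ncard := Set.ncard_le_ncard hsub T.finite_toSet
    _ = T.card := Set.ncard_coe_finset T
    _ ≤ ∑ l ∈ Finset.range (k + 1), Nat.choose n l * (1 + (n - l)) := count_le
end

section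
/- Equivalence of objective robustification: for η ∈ ℝ^J with c̃_j η_j ≥ 0, budgets Γ_i ≥ 0 and server map s : J → I, the worst-case objective min over ξ ∈ U of ∑_j (c̄_j − ξ_j c̃_j) η_j equals ∑_j c̄_j η_j − min over (β, γ) ≥ 0 with β_i + γ_{i,j} ≥ c̃_j η_j (for all i and j with s(j) = i) of ∑_i (Γ_i β_i + ∑_{j : s(j)=i} γ_{i,j}), where U = {ξ : 0 ≤ ξ ≤ 1, ∑_{j:s(j)=i} ξ_j ≤ Γ_i ∀i}. -/
/-!
For each server `i` the inner maximisation `max ∑_{s j = i} ξ_j a_j` over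
`0 ≤ ξ ≤ 1, ∑ ξ_j ≤ Γ_i` (with `a_j = c̃_j η_j ≥ 0`) is a fractional knapsack with unit
weights. The greedy solution packs items in decreasing order of `a_j`; taking as dual price
`β_i` the value of the item packed last and `γ_{i,j} = a_j - β_i` for the fully packed ones
gives a dual feasible point with the same objective, while weak duality bounds every primal
value by every dual value. Hence both infima in the statement are attained at this pair, and
summing over servers gives the identity.
-/

open Finset Function

section Knapsack

variable {J : Type*} (a : J → ℝ)

/-- The price bound `β ≤ b` is the induction invariant: it keeps the surplus `a m - β` of the
next, larger item nonnegative. -/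
theorem exists_knapsack_pair_with_price_bound (S : Finset J) (ha : ∀ j ∈ S, 0 ≤ a j)
    (Γ : ℝ) (hΓ : 0 ≤ Γ) :
    ∃ (ξ : J → ℝ) (β : ℝ) (γ : J → ℝ),
      (∀ j, 0 ≤ ξ j ∧ ξ j ≤ 1) ∧ ∑ j ∈ S, ξ j ≤ Γ ∧ 0 ≤ β ∧ (∀ j, 0 ≤ γ j) ∧
      (∀ j ∈ S, a j ≤ β + γ j) ∧ (∀ b, 0 ≤ b → (∀ j ∈ S, a j ≤ b) → β ≤ b) ∧
      Γ * β + ∑ j ∈ S, γ j = ∑ j ∈ S, ξ j * a j := by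
  classical
  induction S using Finset.induction_on_max_value a generalizing Γ with
  | empty => exact ⟨0, 0, 0, by simp, by simpa, le_rfl, fun _ => le_rfl, by simp,
      fun _ hb _ => hb, by simp⟩
  | insert m S hm hmax ih =>
    have ham : 0 ≤ a m := ha m (mem_insert_self m S)
    have hne : ∀ j ∈ S, j ≠ m := fun j hj => ne_of_mem_of_not_mem hj hm
    by_cases hΓ1 : 1 ≤ Γ
    · -- pack `m` fully and solve the rest with budget `Γ - 1`
      obtain ⟨ξ, β, γ, hξ, hξΓ, hβ, hγ, hcover, hβb, hval⟩ :=
        ih (fun j hj => ha j (mem_insert_of_mem hj)) (Γ - 1) (by linarith)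
      have hβm : β ≤ a m := hβb (a m) ham hmax
      refine ⟨update ξ m 1, β, update γ m (a m - β), fun j => ?_, ?_, hβ, fun j => ?_,
        ?_, fun b hb hab => hβb b hb fun j hj => hab j (mem_insert_of_mem hj), ?_⟩
      · rcases eq_or_ne j m with rfl | hjm <;> simp [update_of_ne, *]
      · simp only [sum_insert hm, sum_update_of_notMem hm, update_self]
        linarith
      · rcases eq_or_ne j m with rfl | hjm <;> simp [update_of_ne, *]
      · simp +contextual [update_of_ne, hne, hcover]
      · have hrest : ∑ j ∈ S, update ξ m 1 j * a j = ∑ j ∈ S, ξ j * a j :=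
          sum_congr rfl fun j hj => by rw [update_of_ne (hne j hj)]
        simp only [sum_insert hm, sum_update_of_notMem hm, update_self, one_mul, hrest]
        linarith
    · -- the budget is exhausted by a fraction of `m`, whose value becomes the price
      replace hΓ1 := not_le.1 hΓ1
      refine ⟨update 0 m Γ, a m, 0, fun j => ?_, ?_, ham, fun _ => le_rfl, ?_,
        fun b _ hab => hab m (mem_insert_self m S), ?_⟩
      · rcases eq_or_ne j m with rfl | hjm <;> simp [update_of_ne, hΓ1.le, *]
      · simp [sum_insert hm, sum_update_of_notMem hm]
      · simpa using hmax
      · simp +contextual [sum_insert hm, update_of_ne, hne]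

theorem exists_knapsack_pair (S : Finset J) (ha : ∀ j ∈ S, 0 ≤ a j) (Γ : ℝ) (hΓ : 0 ≤ Γ) :
    ∃ (ξ : J → ℝ) (β : ℝ) (γ : J → ℝ),
      (∀ j, 0 ≤ ξ j ∧ ξ j ≤ 1) ∧ ∑ j ∈ S, ξ j ≤ Γ ∧ 0 ≤ β ∧ (∀ j, 0 ≤ γ j) ∧
      (∀ j ∈ S, a j ≤ β + γ j) ∧ Γ * β + ∑ j ∈ S, γ j = ∑ j ∈ S, ξ j * a j :=
  let ⟨ξ, β, γ, hξ, hξΓ, hβ, hγ, hcover, _, hval⟩ :=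
    exists_knapsack_pair_with_price_bound a S ha Γ hΓ
  ⟨ξ, β, γ, hξ, hξΓ, hβ, hγ, hcover, hval⟩

theorem sum_mul_le_knapsack_dual (S : Finset J) {Γ β : ℝ} {ξ γ : J → ℝ}
    (hξ : ∀ j ∈ S, 0 ≤ ξ j ∧ ξ j ≤ 1) (hξΓ : ∑ j ∈ S, ξ j ≤ Γ) (hβ : 0 ≤ β)
    (hγ : ∀ j ∈ S, 0 ≤ γ j) (hcover : ∀ j ∈ S, a j ≤ β + γ j) :
    ∑ j ∈ S, ξ j * a j ≤ Γ * β + ∑ j ∈ S, γ j :=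
  calc ∑ j ∈ S, ξ j * a j
      ≤ ∑ j ∈ S, (ξ j * β + γ j) := sum_le_sum fun j hj => by
        have := hcover j hj
        nlinarith [hξ j hj, hγ j hj]
    _ = (∑ j ∈ S, ξ j) * β + ∑ j ∈ S, γ j := by rw [sum_add_distrib, sum_mul]
    _ ≤ Γ * β + ∑ j ∈ S, γ j := by gcongr

end Knapsack

section Servers

variable {J I : Type*} [Fintype J] [Fintype I] [DecidableEq I]
  (s : J → I) (a : J → ℝ) (Γ : I → ℝ)

theorem sum_mul_le_server_dual {ξ : J → ℝ} (hξ : ∀ j, 0 ≤ ξ j ∧ ξ j ≤ 1)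
    (hξΓ : ∀ i, ∑ j ∈ univ.filter (fun j => s j = i), ξ j ≤ Γ i)
    {β : I → ℝ} {γ : I → J → ℝ} (hβ : ∀ i, 0 ≤ β i) (hγ : ∀ i j, 0 ≤ γ i j)
    (hcover : ∀ j, a j ≤ β (s j) + γ (s j) j) :
    ∑ j, ξ j * a j ≤ ∑ i, (Γ i * β i + ∑ j ∈ univ.filter (fun j => s j = i), γ i j) := by
  rw [← sum_fiberwise univ s]
  refine sum_le_sum fun i _ => sum_mul_le_knapsack_dual a _ (fun j _ => hξ j) (hξΓ i) (hβ i)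
    (fun j _ => hγ i j) fun j hj => ?_
  rw [← (mem_filter.1 hj).2]
  exact hcover j

theorem exists_server_pair (ha : ∀ j, 0 ≤ a j) (hΓ : ∀ i, 0 ≤ Γ i) :
    ∃ (ξ : J → ℝ) (β : I → ℝ) (γ : I → J → ℝ),
      (∀ j, 0 ≤ ξ j ∧ ξ j ≤ 1) ∧ (∀ i, ∑ j ∈ univ.filter (fun j => s j = i), ξ j ≤ Γ i) ∧
      (∀ i, 0 ≤ β i) ∧ (∀ i j, 0 ≤ γ i j) ∧ (∀ j, a j ≤ β (s j) + γ (s j) j) ∧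
      ∑ j, ξ j * a j = ∑ i, (Γ i * β i + ∑ j ∈ univ.filter (fun j => s j = i), γ i j) := by
  choose ξ β γ hξ hξΓ hβ hγ hcover hval using
    fun i => exists_knapsack_pair a (univ.filter (fun j => s j = i)) (fun j _ => ha j)
      (Γ i) (hΓ i)
  have hξs : ∀ i, ∀ j ∈ univ.filter (fun j => s j = i), ξ (s j) j = ξ i j :=
    fun i j hj => by rw [(mem_filter.1 hj).2]
  refine ⟨fun j => ξ (s j) j, β, γ, fun j => hξ (s j) j,
    fun i => (sum_congr rfl (hξs i)).trans_le (hξΓ i), hβ, hγ,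
    fun j => hcover (s j) j (by simp), ?_⟩
  rw [← sum_fiberwise univ s]
  refine sum_congr rfl fun i _ => ?_
  rw [hval i]
  exact sum_congr rfl fun j hj => congrArg (· * a j) (hξs i j hj)

end Servers

/-- equivalence of objective robustification: the worst-case objective
`min_{ξ∈U} ∑_j (c̄_j - ξ_j c̃_j) η_j` equals the nominal objective minus the optimal
value of the dual of the inner maximization. -/
theorem stmt14 {J I : Type*} [Fintype J] [Fintype I] [DecidableEq I]
    (s : J → I) (cbar ctil η : J → ℝ) (hcη : ∀ j, 0 ≤ ctil j * η j)
    (Γ : I → ℝ) (hΓ : ∀ i, 0 ≤ Γ i) :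
    sInf {v : ℝ | ∃ ξ : J → ℝ, (∀ j, 0 ≤ ξ j ∧ ξ j ≤ 1) ∧
        (∀ i, (∑ j ∈ Finset.univ.filter (fun j => s j = i), ξ j) ≤ Γ i) ∧
        v = ∑ j, (cbar j - ξ j * ctil j) * η j} =
      (∑ j, cbar j * η j) -
        sInf {v : ℝ | ∃ (β : I → ℝ) (γ : I → J → ℝ),
          (∀ i, 0 ≤ β i) ∧ (∀ i j, 0 ≤ γ i j) ∧
          (∀ j, β (s j) + γ (s j) j ≥ ctil j * η j) ∧
          v = ∑ i, (Γ i * β i +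
            ∑ j ∈ Finset.univ.filter (fun j => s j = i), γ i j)} := by
  set a : J → ℝ := fun j => ctil j * η j
  have hobj : ∀ ξ : J → ℝ,
      ∑ j, (cbar j - ξ j * ctil j) * η j = ∑ j, cbar j * η j - ∑ j, ξ j * a j := fun ξ => by
    rw [← sum_sub_distrib]
    exact sum_congr rfl fun j _ => by ring
  obtain ⟨ξ₀, β₀, γ₀, hξ₀, hξ₀Γ, hβ₀, hγ₀, hcover₀, hval₀⟩ := exists_server_pair s a Γ hcη hΓ
  rw [IsLeast.csInf_eq (a := ∑ j, cbar j * η j - ∑ j, ξ₀ j * a j),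
    IsLeast.csInf_eq (a := ∑ j, ξ₀ j * a j)]
  · refine ⟨⟨β₀, γ₀, hβ₀, hγ₀, hcover₀, hval₀⟩, ?_⟩
    rintro _ ⟨β, γ, hβ, hγ, hcover, rfl⟩
    exact sum_mul_le_server_dual s a Γ hξ₀ hξ₀Γ hβ hγ hcover
  · refine ⟨⟨ξ₀, hξ₀, hξ₀Γ, (hobj ξ₀).symm⟩, ?_⟩
    rintro _ ⟨ξ, hξ, hξΓ, rfl⟩
    rw [hobj, hval₀]
    exact sub_le_sub_left (sum_mul_le_server_dual s a Γ hξ hξΓ hβ₀ hγ₀ hcover₀) _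
end

section
/- Explicit optimal dual from a threshold: let g : N → ℝ be nonnegative, Γ ∈ ℝ with 0 ≤ Γ ≤ |N| = n, let g_{(1)} ≥ ⋯ ≥ g_{(n)} be the ordered values of g, set β* = g_{(⌊Γ⌋+1)} if ⌊Γ⌋ < n and β* = 0 otherwise, and set γ*_j = max(0, g_j − β*). Then (β*, γ*) is dual feasible and Γβ* + ∑_j γ*_j = ∑_{l=1}^{⌊Γ⌋} g_{(l)} + (Γ − ⌊Γ⌋) g_{(⌊Γ⌋+1)} (with the last term read as 0 if ⌊Γ⌋ = n), which equals the primal optimal value; hence no duality gap occurs even for non-integer Γ. -/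
/-- explicit optimal dual from a threshold: with `β* = g_{(⌊Γ⌋+1)}`
(or `0` if `⌊Γ⌋ = n`) and `γ*_j = max 0 (g_j - β*)`, the pair `(β*, γ*)` is dual
feasible, its objective equals `∑_{l < ⌊Γ⌋} g_{(l)} + (Γ - ⌊Γ⌋) g_{(⌊Γ⌋+1)}`, and
that value is the primal optimum: no duality gap, even for non-integer `Γ`. -/
theorem stmt16 {N : Type*} [Fintype N] {n : ℕ} (e : Fin n ≃ N)
    (g : N → ℝ) (hg : ∀ j, 0 ≤ g j)
    (hmono : ∀ m m' : Fin n, m ≤ m' → g (e m') ≤ g (e m))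
    (Γ : ℝ) (hΓ0 : 0 ≤ Γ) (hΓn : Γ ≤ n)
    (βs : ℝ) (hβs : βs = if h : ⌊Γ⌋₊ < n then g (e ⟨⌊Γ⌋₊, h⟩) else 0)
    (γs : N → ℝ) (hγs : ∀ j, γs j = max 0 (g j - βs)) :
    (0 ≤ βs ∧ (∀ j, 0 ≤ γs j) ∧ (∀ j, βs + γs j ≥ g j)) ∧
    (Γ * βs + ∑ j, γs j =
      (∑ m ∈ Finset.univ.filter (fun m : Fin n => (m : ℕ) < ⌊Γ⌋₊), g (e m)) +
        (Γ - ⌊Γ⌋₊) * (if h : ⌊Γ⌋₊ < n then g (e ⟨⌊Γ⌋₊, h⟩) else 0)) ∧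
    IsGreatest
      {v : ℝ | ∃ ξ : N → ℝ, (∀ j, 0 ≤ ξ j ∧ ξ j ≤ 1) ∧ (∑ j, ξ j) ≤ Γ ∧
        v = ∑ j, ξ j * g j}
      (Γ * βs + ∑ j, γs j) := by
  have hβ0 : 0 ≤ βs := by
    rw [hβs]
    split
    · exact hg _
    · exact le_refl 0
  have hγ0 : ∀ j, 0 ≤ γs j := fun j => (hγs j) ▸ le_max_left _ _
  have hfeas : ∀ j, βs + γs j ≥ g j := by
    intro j
    have h1 : g j - βs ≤ γs j := (hγs j) ▸ le_max_right _ _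
    linarith
  have hkΓ : ((⌊Γ⌋₊ : ℕ) : ℝ) ≤ Γ := Nat.floor_le hΓ0
  have hΓk1 : Γ < (⌊Γ⌋₊ : ℝ) + 1 := Nat.lt_floor_add_one Γ
  have hkn : ⌊Γ⌋₊ ≤ n := by
    have := Nat.floor_le_of_le hΓn
    simpa using this
  set k := ⌊Γ⌋₊ with hkdef
  -- cardinality of the filter
  have hcard : ((Finset.univ : Finset (Fin n)).filter fun m : Fin n => (m : ℕ) < k).card = k := by
    rw [Finset.card_filter]
    rw [Fin.sum_univ_eq_sum_range (fun i => if i < k then 1 else 0) n]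
    rw [← Finset.sum_filter]
    have hfr : (Finset.range n).filter (· < k) = Finset.range k := by
      ext i
      simp only [Finset.mem_filter, Finset.mem_range]
      omega
    rw [hfr, Finset.sum_const, Finset.card_range, smul_eq_mul, mul_one]
  set A := ∑ m ∈ Finset.univ.filter (fun m : Fin n => (m : ℕ) < k), g (e m) with hA
  -- the sum of γs
  have hsumγ : ∑ j, γs j = A - k * βs := by
    rw [← Equiv.sum_comp e γs]
    by_cases h : k < n
    · have hpt : ∀ m : Fin n, γs (e m) =
          if (m : ℕ) < k then g (e m) - βs else 0 := by
        intro m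
        rw [hγs]
        by_cases hm : (m : ℕ) < k
        · have hβle : βs ≤ g (e m) := by
            rw [hβs, dif_pos h]
            exact hmono m ⟨k, h⟩ (by simp [Fin.le_def]; omega)
          rw [if_pos hm, max_eq_right (by linarith)]
        · have hgle : g (e m) ≤ βs := by
            rw [hβs, dif_pos h]
            exact hmono ⟨k, h⟩ m (by simp [Fin.le_def]; omega)
          rw [if_neg hm, max_eq_left (by linarith)]
      rw [Finset.sum_congr rfl (fun m _ => hpt m), ← Finset.sum_filter,
        Finset.sum_sub_distrib, Finset.sum_const, hcard, nsmul_eq_mul, ← hA]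
    · have hβ : βs = 0 := by rw [hβs, dif_neg h]
      have hkeq : k = n := le_antisymm hkn (le_of_not_gt h)
      have hfu : (Finset.univ : Finset (Fin n)).filter (fun m : Fin n => (m : ℕ) < k) =
          Finset.univ := by
        ext m
        simp [hkeq, m.isLt]
      have : ∀ m : Fin n, γs (e m) = g (e m) := by
        intro m
        rw [hγs, hβ, sub_zero, max_eq_right (hg _)]
      rw [Finset.sum_congr rfl (fun m _ => this m), hβ, hA, hfu]
      ring
  have hobj : Γ * βs + ∑ j, γs j =
      A + (Γ - (k : ℝ)) * (if h : k < n then g (e ⟨k, h⟩) else 0) := by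
    rw [hsumγ, ← hβs]
    ring
  refine ⟨⟨hβ0, hγ0, hfeas⟩, hobj, ?_, ?_⟩
  · -- membership : build optimal ξ
    classical
    refine ⟨fun j => if ((e.symm j : Fin n) : ℕ) < k then 1
      else if ((e.symm j : Fin n) : ℕ) = k then Γ - k else 0, ?_, ?_, ?_⟩
    · intro j
      by_cases h1 : ((e.symm j : Fin n) : ℕ) < k
      · simp [h1]
      · by_cases h2 : ((e.symm j : Fin n) : ℕ) = k
        · simp only [if_neg h1, if_pos h2]
          constructor <;> linarith
        · simp [h1, h2]
    · -- sum of ξ is ≤ Γ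
      rw [← Equiv.sum_comp e]
      simp only [Equiv.symm_apply_apply]
      rw [Fin.sum_univ_eq_sum_range
        (fun i => if i < k then (1 : ℝ) else if i = k then Γ - k else 0) n]
      have hpt : ∀ i, (if i < k then (1 : ℝ) else if i = k then Γ - k else 0) =
          (if i < k then (1 : ℝ) else 0) + (if i = k then Γ - k else 0) := by
        intro i
        by_cases h1 : i < k
        · rw [if_pos h1, if_pos h1, if_neg (by omega), add_zero]
        · rw [if_neg h1, if_neg h1, zero_add]
      rw [Finset.sum_congr rfl (fun i _ => hpt i), Finset.sum_add_distrib,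
        ← Finset.sum_filter]
      have hfr : (Finset.range n).filter (· < k) = Finset.range k := by
        ext i
        simp only [Finset.mem_filter, Finset.mem_range]
        omega
      rw [hfr, Finset.sum_const, Finset.card_range, nsmul_eq_mul, mul_one,
        Finset.sum_ite_eq' (Finset.range n) k (fun _ => Γ - (k : ℝ))]
      by_cases h : k < n
      · rw [if_pos (Finset.mem_range.mpr h)]
        linarith
      · rw [if_neg (by simp [Finset.mem_range]; omega)]
        have hkeq : k = n := le_antisymm hkn (le_of_not_gt h)
        have : Γ = n := le_antisymm hΓn (by rw [← hkeq]; exact hkΓ)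
        rw [this, hkeq]
        simp
    · -- value equals dual objective
      rw [hobj, ← Equiv.sum_comp e (fun j => _ * g j)]
      simp only [Equiv.symm_apply_apply]
      by_cases h : k < n
      · rw [dif_pos h]
        have hpt : ∀ m : Fin n,
            (if ((m : Fin n) : ℕ) < k then (1:ℝ) else if ((m : Fin n) : ℕ) = k then Γ - k else 0) * g (e m) =
            (if (m : ℕ) < k then g (e m) else 0) +
              (if m = (⟨k, h⟩ : Fin n) then (Γ - (k:ℝ)) * g (e ⟨k, h⟩) else 0) := by
          intro m
          by_cases h1 : (m : ℕ) < k
          · rw [if_pos h1, if_pos h1, if_neg (by simp [Fin.ext_iff]; omega), one_mul,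
              add_zero]
          · by_cases h2 : (m : ℕ) = k
            · have hme : m = (⟨k, h⟩ : Fin n) := by simp [Fin.ext_iff, h2]
              rw [if_neg h1, if_pos h2, if_neg h1, if_pos hme, hme, zero_add]
            · rw [if_neg h1, if_neg h2, if_neg h1,
                if_neg (by simp [Fin.ext_iff]; omega), zero_mul, add_zero]
        rw [Finset.sum_congr rfl (fun m _ => hpt m), Finset.sum_add_distrib,
          ← Finset.sum_filter, Finset.sum_ite_eq' Finset.univ (⟨k, h⟩ : Fin n)
            (fun _ => (Γ - (k:ℝ)) * g (e ⟨k, h⟩)), if_pos (Finset.mem_univ _), ← hA]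
      · rw [dif_neg h]
        have hkeq : k = n := le_antisymm hkn (le_of_not_gt h)
        have hfu : (Finset.univ : Finset (Fin n)).filter (fun m : Fin n => (m : ℕ) < k) =
            Finset.univ := by
          ext m
          simp [hkeq, m.isLt]
        have hpt : ∀ m : Fin n,
            (if (m : ℕ) < k then (1:ℝ) else if (m : ℕ) = k then Γ - k else 0) * g (e m) =
            g (e m) := by
          intro m
          rw [if_pos (by omega), one_mul]
        rw [Finset.sum_congr rfl (fun m _ => hpt m), hA, hfu]
        ring
  · -- upper bound : weak duality
    rintro v ⟨ξ, hξ, hξsum, rfl⟩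
    calc ∑ j, ξ j * g j ≤ ∑ j, ξ j * (βs + γs j) := by
          apply Finset.sum_le_sum
          intro j _
          exact mul_le_mul_of_nonneg_left (hfeas j) (hξ j).1
      _ = (∑ j, ξ j) * βs + ∑ j, ξ j * γs j := by
          simp only [mul_add]
          rw [Finset.sum_add_distrib, Finset.sum_mul]
      _ ≤ Γ * βs + ∑ j, γs j := by
          apply add_le_add
          · exact mul_le_mul_of_nonneg_right hξsum hβ0
          · apply Finset.sum_le_sum
            intro j _
            exact mul_le_of_le_one_left (hγ0 j) (hξ j).2
end

section
/- Robust counterpart preserves feasibility (forward direction of Theorem on RC correctness): if (η, x, β, γ) is feasible for the robust counterpart — i.e., for all k: ∑_j Ḡ_{k,j} η_j + ∑_i (Γ_i β_{k,i} + ∑_{j: s(j)=i} γ_{k,i,j}) + ẋ_k = a_k with β_{k,i} + γ_{k,i,j} ≥ G̃_{k,j} η_j, all variables with required nonnegativity — then for every ξ in the budgeted box U (0 ≤ ξ ≤ 1, ∑_{j:s(j)=i} ξ_j ≤ Γ_i ∀i) one has ∑_j (Ḡ_{k,j} + ξ_j G̃_{k,j}) η_j ≤ a_k for all k with ẋ_k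 ≥ 0; i.e., η is robust feasible for the uncertain constraints. -/
/-!
Weak duality, one constraint at a time: for fixed `η`, the worst case of
`∑ⱼ ξⱼ G̃ₖⱼ ηⱼ` over the budgeted box is a linear program whose dual objective at the
feasible point `(βₖ, γₖ)` is `∑ᵢ (Γᵢ βₖᵢ + ∑_{s(j)=i} γₖᵢⱼ)`, and the RC equality says
that this plus the nominal part plus the slack `ẋₖ ≥ 0` equals `aₖ`.
-/

open Finset

lemma mul_le_mul_add_of_le_add {ξ c b g : ℝ} (hξ₀ : 0 ≤ ξ) (hξ₁ : ξ ≤ 1) (hg : 0 ≤ g)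
    (hc : c ≤ b + g) : ξ * c ≤ ξ * b + g := by
  calc ξ * c ≤ ξ * (b + g) := mul_le_mul_of_nonneg_left hc hξ₀
    _ = ξ * b + ξ * g := mul_add ξ b g
    _ ≤ ξ * b + g := by gcongr; exact mul_le_of_le_one_left hg hξ₁

lemma sum_mul_le_budget_dual {J I : Type*} [Fintype J] [Fintype I] [DecidableEq I]
    (s : J → I) (Γ : I → ℝ) (ξ c : J → ℝ) (β : I → ℝ) (γ : I → J → ℝ)
    (hξ : ∀ j, 0 ≤ ξ j ∧ ξ j ≤ 1)
    (hbud : ∀ i, (∑ j ∈ univ.filter (fun j => s j = i), ξ j) ≤ Γ i)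
    (hβ : ∀ i, 0 ≤ β i) (hγ : ∀ j, 0 ≤ γ (s j) j)
    (hc : ∀ j, c j ≤ β (s j) + γ (s j) j) :
    ∑ j, ξ j * c j ≤
      ∑ i, (Γ i * β i + ∑ j ∈ univ.filter (fun j => s j = i), γ i j) := by
  have hfiber : ∀ i, ∑ j ∈ univ.filter (fun j => s j = i), (ξ j * β (s j) + γ (s j) j) ≤
      Γ i * β i + ∑ j ∈ univ.filter (fun j => s j = i), γ i j := by
    intro i
    have hsi : ∀ j ∈ univ.filter (fun j => s j = i),
        ξ j * β (s j) + γ (s j) j = ξ j * β i + γ i j := by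
      intro j hj
      rw [(mem_filter.mp hj).2]
    rw [sum_congr rfl hsi, sum_add_distrib, ← sum_mul]
    gcongr
    exacts [hβ i, hbud i]
  calc ∑ j, ξ j * c j ≤ ∑ j, (ξ j * β (s j) + γ (s j) j) :=
        sum_le_sum fun j _ => mul_le_mul_add_of_le_add (hξ j).1 (hξ j).2 (hγ j) (hc j)
    _ = ∑ i, ∑ j ∈ univ.filter (fun j => s j = i), (ξ j * β (s j) + γ (s j) j) :=
        (sum_fiberwise univ s _).symm
    _ ≤ _ := sum_le_sum fun i _ => hfiber i

theorem stmt17_general {K J I : Type*} [Fintype J] [Fintype I] [DecidableEq I]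
    (s : J → I) (Gbar Gtil : K → J → ℝ) (a : K → ℝ)
    (Γ : I → ℝ)
    (η : J → ℝ) (xdot : K → ℝ) (β : K → I → ℝ) (γ : K → I → J → ℝ)
    (hxdot : ∀ k, 0 ≤ xdot k)
    (hβ : ∀ k i, 0 ≤ β k i)
    (hγ : ∀ k i j, s j = i → 0 ≤ γ k i j)
    (heq : ∀ k, (∑ j, Gbar k j * η j) +
      (∑ i, (Γ i * β k i + ∑ j ∈ Finset.univ.filter (fun j => s j = i), γ k i j)) +
      xdot k = a k)
    (hdual : ∀ k, ∀ j, β k (s j) + γ k (s j) j ≥ Gtil k j * η j) :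
    ∀ ξ : J → ℝ, (∀ j, 0 ≤ ξ j ∧ ξ j ≤ 1) →
      (∀ i, (∑ j ∈ Finset.univ.filter (fun j => s j = i), ξ j) ≤ Γ i) →
      ∀ k, ∑ j, (Gbar k j + ξ j * Gtil k j) * η j ≤ a k := by
  intro ξ hξ hbud k
  have hsplit : ∑ j, (Gbar k j + ξ j * Gtil k j) * η j =
      ∑ j, Gbar k j * η j + ∑ j, ξ j * (Gtil k j * η j) := by
    simp only [add_mul, mul_assoc, sum_add_distrib]
  have hworst := sum_mul_le_budget_dual s Γ ξ (fun j => Gtil k j * η j) (β k) (γ k) hξ hbud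
    (hβ k) (fun j => hγ k (s j) j rfl) (hdual k)
  linarith [heq k, hxdot k]

/-- robust-counterpart feasibility implies robust feasibility: if
`(η, ẋ, β, γ)` satisfies the RC equalities and inequalities with the required
nonnegativity, then for every `ξ` in the multi-budget box `U` and every constraint
`k`, the uncertain inequality `∑_j (Ḡ_{k,j} + ξ_j G̃_{k,j}) η_j ≤ a_k` holds. -/
theorem stmt17 {K J I : Type*} [Fintype K] [Fintype J] [Fintype I] [DecidableEq I]
    (s : J → I) (Gbar Gtil : K → J → ℝ) (a : K → ℝ)
    (Γ : I → ℝ) (hΓ : ∀ i, 0 ≤ Γ i)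
    (η : J → ℝ) (xdot : K → ℝ) (β : K → I → ℝ) (γ : K → I → J → ℝ)
    (hxdot : ∀ k, 0 ≤ xdot k)
    (hβ : ∀ k i, 0 ≤ β k i)
    (hγ : ∀ k i j, s j = i → 0 ≤ γ k i j)
    (heq : ∀ k, (∑ j, Gbar k j * η j) +
      (∑ i, (Γ i * β k i + ∑ j ∈ Finset.univ.filter (fun j => s j = i), γ k i j)) +
      xdot k = a k)
    (hdual : ∀ k, ∀ j, β k (s j) + γ k (s j) j ≥ Gtil k j * η j) :
    ∀ ξ : J → ℝ, (∀ j, 0 ≤ ξ j ∧ ξ j ≤ 1) →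
      (∀ i, (∑ j ∈ Finset.univ.filter (fun j => s j = i), ξ j) ≤ Γ i) →
      ∀ k, ∑ j, (Gbar k j + ξ j * Gtil k j) * η j ≤ a k :=
  stmt17_general s Gbar Gtil a Γ η xdot β γ hxdot hβ hγ heq hdual
end
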